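/- No strict partition admits a removable double k-ribbon whose two single-ribbon components have equal size; i.e., if λ∖ν is a removable double k-ribbon with components R and S, then |R| > |S| (so k cannot be split as (t,t)). -/

import Mathlib

def IsStrictPartition (s : Finset ℕ) : Prop := ∀ x ∈ s, 0 < x

/-- The `i`-th largest part of `s` (1-indexed); `0` if out of range. -/
def nthPart (s : Finset ℕ) (i : ℕ) : ℕ := (s.sort (· ≤ ·)).reverse.getD (i - 1) 0

/-- The shifted diagram: row `i` (1-indexed) has cells `(i, j)` with `i ≤ j ≤ i + λᵢ - 1`. -/
def shiftedDiagram (s : Finset ℕ) : Set (ℕ × ℕ) :=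
  {c | 1 ≤ c.1 ∧ c.1 ≤ c.2 ∧ c.2 + 1 ≤ c.1 + nthPart s c.1}

def skewDiag (lam nu : Finset ℕ) : Set (ℕ × ℕ) := shiftedDiagram lam \ shiftedDiagram nu

/-- Diagonal value `j - i + 1` of a cell `(i, j)`. -/
def diagVal (c : ℕ × ℕ) : ℕ := c.2 + 1 - c.1

def CellAdj (c d : ℕ × ℕ) : Prop :=
  (c.1 = d.1 ∧ (c.2 + 1 = d.2 ∨ d.2 + 1 = c.2)) ∨
  (c.2 = d.2 ∧ (c.1 + 1 = d.1 ∨ d.1 + 1 = c.1))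

def EdgeConnected (S : Set (ℕ × ℕ)) : Prop :=
  ∀ c ∈ S, ∀ d ∈ S, Relation.ReflTransGen (fun x y => CellAdj x y ∧ x ∈ S ∧ y ∈ S) c d

def IsHead (S : Set (ℕ × ℕ)) (c : ℕ × ℕ) : Prop :=
  c ∈ S ∧ ∀ d ∈ S, diagVal d ≤ diagVal c

def IsTail (S : Set (ℕ × ℕ)) (c : ℕ × ℕ) : Prop :=
  c ∈ S ∧ ∀ d ∈ S, diagVal c ≤ diagVal d

def IsRemovableSingleRibbon (lam nu : Finset ℕ) (k : ℕ) : Prop :=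
  IsStrictPartition lam ∧ IsStrictPartition nu ∧
  shiftedDiagram nu ⊆ shiftedDiagram lam ∧
  (skewDiag lam nu).ncard = k ∧
  EdgeConnected (skewDiag lam nu) ∧
  Set.InjOn diagVal (skewDiag lam nu)

def IsDoubleDecomp (lam nu : Finset ℕ) (R S : Set (ℕ × ℕ)) : Prop :=
  IsStrictPartition lam ∧ IsStrictPartition nu ∧
  shiftedDiagram nu ⊆ shiftedDiagram lam ∧
  Disjoint R S ∧ R ∪ S = skewDiag lam nu ∧
  R.Nonempty ∧ EdgeConnected R ∧ Set.InjOn diagVal R ∧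
  S.Nonempty ∧ EdgeConnected S ∧ Set.InjOn diagVal S ∧
  S.ncard ≤ R.ncard ∧
  (∃ a, IsTail R (a, a)) ∧ (∃ b, IsTail S (b, b)) ∧
  (∃ mu : Finset ℕ, IsStrictPartition mu ∧ shiftedDiagram mu = shiftedDiagram lam \ R)

def IsRemovableDoubleRibbon (lam nu : Finset ℕ) (k : ℕ) : Prop :=
  (skewDiag lam nu).ncard = k ∧ ∃ R S, IsDoubleDecomp lam nu R S

def IsRemovableRibbon (lam nu : Finset ℕ) (k : ℕ) : Prop :=
  IsRemovableSingleRibbon lam nu k ∨ IsRemovableDoubleRibbon lam nu k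

/-!
A component `T` of a double ribbon is edge-connected, meets each diagonal at most once and has its
tail on the main diagonal. A step between adjacent cells raises the diagonal value by at most one,
so the diagonal values of `T` are exactly `1, …, |T|`.

Write `#μ(d)` for the number of cells of the shifted diagram of `μ` on diagonal `d ≥ 1`. It is the
number of parts of `μ` that are `≥ d`, so it never increases with `d`, and it drops by at most one
from `d` to `d + 1` because the parts are distinct. If `|R| = |S| = t`, then `λ ∖ ν` has two cells
on diagonal `t` and none on diagonal `t + 1`, whence
`#ν(t + 1) ≤ #ν(t) = #λ(t) - 2 ≤ #λ(t + 1) - 1 = #ν(t + 1) - 1`.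
-/

lemma nthPart_eq_getElem?_getD (s : Finset ℕ) (i : ℕ) :
    nthPart s i = ((s.sort (· ≤ ·)).reverse[i - 1]?).getD 0 :=
  List.getD_eq_getElem?_getD

lemma nthPart_eq_zero_of_card_lt {s : Finset ℕ} {i : ℕ} (hi : s.card < i) : nthPart s i = 0 := by
  rw [nthPart_eq_getElem?_getD, List.getElem?_eq_none]
  · rfl
  · rw [List.length_reverse, Finset.length_sort]
    omega

lemma nthPart_mem_of_pos {s : Finset ℕ} {i : ℕ} (hpos : 0 < nthPart s i) : nthPart s i ∈ s := by
  rw [nthPart_eq_getElem?_getD] at hpos ⊢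
  cases hget : (s.sort (· ≤ ·)).reverse[i - 1]? with
  | none => simp [hget] at hpos
  | some x => simpa using List.mem_of_getElem? hget

lemma nthPart_le_sup (s : Finset ℕ) (i : ℕ) : nthPart s i ≤ s.sup id := by
  rcases Nat.eq_zero_or_pos (nthPart s i) with h | h
  · exact h ▸ Nat.zero_le _
  · exact Finset.le_sup (f := id) (nthPart_mem_of_pos h)

lemma exists_nthPart_eq {s : Finset ℕ} {x : ℕ} (hx : x ∈ s) : ∃ i, 1 ≤ i ∧ nthPart s i = x := by
  obtain ⟨n, hn, hnx⟩ := List.mem_iff_getElem.mp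
    (List.mem_reverse.mpr ((Finset.mem_sort (· ≤ ·)).mpr hx))
  refine ⟨n + 1, by omega, ?_⟩
  rw [nthPart_eq_getElem?_getD, Nat.add_sub_cancel, List.getElem?_eq_getElem hn, hnx]
  rfl

lemma nthPart_injOn (s : Finset ℕ) : Set.InjOn (nthPart s) {i | 1 ≤ i ∧ 0 < nthPart s i} := by
  rintro i ⟨hi1, hipos⟩ j ⟨hj1, hjpos⟩ hij
  have hlt : ∀ {k}, 0 < nthPart s k → k - 1 < (s.sort (· ≤ ·)).reverse.length := fun hk => by
    by_contra h
    rw [nthPart_eq_getElem?_getD, List.getElem?_eq_none (not_lt.mp h)] at hk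
    exact absurd hk (lt_irrefl 0)
  rw [nthPart_eq_getElem?_getD, nthPart_eq_getElem?_getD, List.getElem?_eq_getElem (hlt hipos),
    List.getElem?_eq_getElem (hlt hjpos)] at hij
  have := (List.nodup_reverse.mpr (Finset.sort_nodup s (· ≤ ·))).getElem_inj_iff.mp hij
  omega

lemma mem_shiftedDiagram {s : Finset ℕ} {i j : ℕ} :
    (i, j) ∈ shiftedDiagram s ↔ 1 ≤ i ∧ i ≤ j ∧ j + 1 ≤ i + nthPart s i :=
  Iff.rfl

lemma shiftedDiagram_finite (s : Finset ℕ) : (shiftedDiagram s).Finite := by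
  refine ((Set.finite_Iic s.card).prod (Set.finite_Iic (s.card + s.sup id))).subset ?_
  rintro ⟨i, j⟩ hc
  obtain ⟨-, hij, hj⟩ := mem_shiftedDiagram.mp hc
  have hi : i ≤ s.card := by
    by_contra h
    rw [nthPart_eq_zero_of_card_lt (not_le.mp h)] at hj
    omega
  have := nthPart_le_sup s i
  exact ⟨hi, show j ≤ _ by omega⟩

def diagSlice (X : Set (ℕ × ℕ)) (d : ℕ) : Set (ℕ × ℕ) := X ∩ diagVal ⁻¹' {d}

lemma mem_diagSlice {X : Set (ℕ × ℕ)} {d : ℕ} {c : ℕ × ℕ} :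
    c ∈ diagSlice X d ↔ c ∈ X ∧ diagVal c = d :=
  Iff.rfl

lemma ncard_diagSlice_shiftedDiagram (s : Finset ℕ) {d : ℕ} (hd : 1 ≤ d) :
    (diagSlice (shiftedDiagram s) d).ncard = (s.filter (d ≤ ·)).card := by
  rw [← Set.ncard_coe_finset]
  refine Set.ncard_congr (fun c _ => nthPart s c.1) ?_ ?_ ?_
  · rintro ⟨i, j⟩ hc
    simp only [mem_diagSlice, mem_shiftedDiagram, diagVal] at hc
    obtain ⟨⟨-, -, hj⟩, hc⟩ := hc
    rw [Finset.mem_coe, Finset.mem_filter]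
    dsimp only
    exact ⟨nthPart_mem_of_pos (by omega), by omega⟩
  · rintro ⟨i, j⟩ ⟨i', j'⟩ hc hc' heq
    simp only [mem_diagSlice, mem_shiftedDiagram, diagVal] at hc hc' heq
    obtain ⟨⟨hi, -, hj⟩, hc⟩ := hc
    obtain ⟨⟨hi', -, hj'⟩, hc'⟩ := hc'
    have : i = i' := nthPart_injOn s ⟨hi, by omega⟩ ⟨hi', by omega⟩ heq
    simp only [Prod.mk.injEq]
    omega
  · intro x hx
    rw [Finset.mem_coe, Finset.mem_filter] at hx
    obtain ⟨i, hi, rfl⟩ := exists_nthPart_eq hx.1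
    refine ⟨(i, i + d - 1), ?_, rfl⟩
    simp only [mem_diagSlice, mem_shiftedDiagram, diagVal]
    omega

lemma card_filter_le_le_card_filter_succ_le_add_one (s : Finset ℕ) (d : ℕ) :
    (s.filter (d ≤ ·)).card ≤ (s.filter (d + 1 ≤ ·)).card + 1 := by
  refine (Finset.card_le_card fun x hx => ?_).trans (Finset.card_insert_le d _)
  rw [Finset.mem_filter] at hx
  rw [Finset.mem_insert, Finset.mem_filter]
  exact (eq_or_lt_of_le hx.2).imp Eq.symm fun h => ⟨hx.1, h⟩

lemma card_filter_succ_le_le_card_filter_le (s : Finset ℕ) (d : ℕ) :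
    (s.filter (d + 1 ≤ ·)).card ≤ (s.filter (d ≤ ·)).card :=
  Finset.card_le_card (Finset.monotone_filter_right s fun _ _ h => Nat.le_of_succ_le h)

lemma ncard_diagSlice_union {X Y : Set (ℕ × ℕ)} (hXY : Disjoint X Y) (hX : X.Finite)
    (hY : Y.Finite) (d : ℕ) :
    (diagSlice (X ∪ Y) d).ncard = (diagSlice X d).ncard + (diagSlice Y d).ncard := by
  rw [diagSlice, Set.union_inter_distrib_right]
  exact Set.ncard_union_eq (hXY.mono Set.inter_subset_left Set.inter_subset_left)
    (hX.subset Set.inter_subset_left) (hY.subset Set.inter_subset_left)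

lemma ncard_diagSlice_eq_one {T : Set (ℕ × ℕ)} (hinj : Set.InjOn diagVal T) {d : ℕ}
    (hd : d ∈ diagVal '' T) : (diagSlice T d).ncard = 1 := by
  obtain ⟨c, hc, rfl⟩ := hd
  exact Set.ncard_eq_one.mpr ⟨c, Set.eq_singleton_iff_unique_mem.mpr
    ⟨⟨hc, rfl⟩, fun c' hc' => hinj hc'.1 hc hc'.2⟩⟩

lemma diagSlice_eq_empty {T : Set (ℕ × ℕ)} {d : ℕ} (hd : d ∉ diagVal '' T) :
    diagSlice T d = ∅ :=
  Set.eq_empty_of_forall_notMem fun c hc => hd ⟨c, hc.1, hc.2⟩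

lemma diagVal_le_succ_of_cellAdj {x y : ℕ × ℕ} (hy : y.1 ≤ y.2) (hadj : CellAdj x y) :
    diagVal y ≤ diagVal x + 1 := by
  simp only [diagVal]
  rcases hadj with ⟨h1, h2 | h2⟩ | ⟨h1, h2 | h2⟩ <;> omega

lemma mem_image_diagVal_of_reflTransGen {T : Set (ℕ × ℕ)} (hT : ∀ c ∈ T, c.1 ≤ c.2)
    {x y : ℕ × ℕ} (hx : x ∈ T)
    (hxy : Relation.ReflTransGen (fun u v => CellAdj u v ∧ u ∈ T ∧ v ∈ T) x y)
    {m : ℕ} (hxm : diagVal x ≤ m) (hmy : m ≤ diagVal y) : m ∈ diagVal '' T := by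
  induction hxy generalizing m with
  | refl => exact ⟨x, hx, by omega⟩
  | @tail u v _ huv ih =>
    obtain ⟨hadj, -, hv⟩ := huv
    by_cases hmu : m ≤ diagVal u
    · exact ih hxm hmu
    · have := diagVal_le_succ_of_cellAdj (hT v hv) hadj
      exact ⟨v, hv, by omega⟩

lemma image_diagVal_eq_Icc {T : Set (ℕ × ℕ)} (hfin : T.Finite) (hT : ∀ c ∈ T, c.1 ≤ c.2)
    (hconn : EdgeConnected T) (hinj : Set.InjOn diagVal T) {a : ℕ} (htail : IsTail T (a, a)) :
    diagVal '' T = Set.Icc 1 T.ncard := by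
  have hdiag : diagVal (a, a) = 1 := by simp [diagVal]
  obtain ⟨h, hh, hhead⟩ := Set.exists_max_image T diagVal hfin ⟨_, htail.1⟩
  have himage : diagVal '' T = Set.Icc 1 (diagVal h) := by
    refine Set.Subset.antisymm ?_ fun m hm => ?_
    · rintro _ ⟨c, hc, rfl⟩
      exact ⟨hdiag ▸ htail.2 c hc, hhead c hc⟩
    · exact mem_image_diagVal_of_reflTransGen hT htail.1 (hconn _ htail.1 h hh)
        (hdiag ▸ hm.1) hm.2
  rw [himage, ← hinj.ncard_image, himage, Set.ncard_Icc_nat, Nat.add_sub_cancel]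

lemma ncard_diagSlice_shiftedDiagram_eq_add {lam nu : Finset ℕ} {R S : Set (ℕ × ℕ)}
    (hsub : shiftedDiagram nu ⊆ shiftedDiagram lam) (hdisj : Disjoint R S)
    (hunion : R ∪ S = skewDiag lam nu) (d : ℕ) :
    (diagSlice (shiftedDiagram lam) d).ncard =
      (diagSlice (shiftedDiagram nu) d).ncard + (diagSlice R d).ncard + (diagSlice S d).ncard := by
  have hfin := shiftedDiagram_finite lam
  have hRS : R ∪ S ⊆ shiftedDiagram lam := hunion ▸ Set.sdiff_subset
  have hdecomp : shiftedDiagram lam = shiftedDiagram nu ∪ (R ∪ S) := by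
    rw [hunion, skewDiag, Set.union_sdiff_cancel hsub]
  rw [hdecomp, ncard_diagSlice_union (hunion ▸ Set.disjoint_sdiff_right) (hfin.subset hsub)
      (hfin.subset hRS),
    ncard_diagSlice_union hdisj (hfin.subset (Set.subset_union_left.trans hRS))
      (hfin.subset (Set.subset_union_right.trans hRS)), add_assoc]

/-- In any removable double ribbon with components `R` and `S`
(`|R| ≥ |S|`), one in fact has `|R| > |S|`: `k` cannot split as `(t, t)`. -/
theorem stmt3 (lam nu : Finset ℕ) (R S : Set (ℕ × ℕ))
    (h : IsDoubleDecomp lam nu R S) :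
    S.ncard < R.ncard := by
  obtain ⟨-, -, hsub, hdisj, hunion, hRne, hRconn, hRinj, -, hSconn, hSinj, hle,
    ⟨a, ha⟩, ⟨b, hb⟩, -⟩ := h
  refine lt_of_le_of_ne hle fun heq => ?_
  have hRS : R ∪ S ⊆ shiftedDiagram lam := hunion ▸ Set.sdiff_subset
  have hfin := shiftedDiagram_finite lam
  have hRfin := hfin.subset (Set.subset_union_left.trans hRS)
  have hRim := image_diagVal_eq_Icc hRfin (fun c hc => (hRS (Or.inl hc)).2.1) hRconn hRinj ha
  have hSim := image_diagVal_eq_Icc (hfin.subset (Set.subset_union_right.trans hRS))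
    (fun c hc => (hRS (Or.inr hc)).2.1) hSconn hSinj hb
  rw [heq] at hSim
  set t := R.ncard
  have ht : 1 ≤ t := (Set.ncard_pos hRfin).mpr hRne
  have hcount_t := ncard_diagSlice_shiftedDiagram_eq_add hsub hdisj hunion t
  have hcount_succ := ncard_diagSlice_shiftedDiagram_eq_add hsub hdisj hunion (t + 1)
  have hsucc : t + 1 ∉ Set.Icc 1 t := fun h => Nat.not_succ_le_self t h.2
  rw [ncard_diagSlice_eq_one hRinj (hRim ▸ ⟨ht, le_rfl⟩),
    ncard_diagSlice_eq_one hSinj (hSim ▸ ⟨ht, le_rfl⟩),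
    ncard_diagSlice_shiftedDiagram lam ht, ncard_diagSlice_shiftedDiagram nu ht] at hcount_t
  rw [diagSlice_eq_empty (T := R) (by rwa [hRim]),
    diagSlice_eq_empty (T := S) (by rwa [hSim]), Set.ncard_empty,
    ncard_diagSlice_shiftedDiagram lam (by omega),
    ncard_diagSlice_shiftedDiagram nu (by omega)] at hcount_succ
  have := card_filter_le_le_card_filter_succ_le_add_one lam t
  have := card_filter_succ_le_le_card_filter_le nu t
  omega
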